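/- Randomized trio error identity (Theorem 2): Under the randomized setting, for every f ∈ F the identity μ − (∫ f dν̂_ω) = CNF_R(f, ν−ν̂)(ω) · DSC_R(ν−ν̂) · VAR_D(f) holds for P-almost every ω, and moreover E_ω[ |CNF_R(f, ν−ν̂)(ω)|² ] ≤ 1. -/

import Mathlib

/-!
Write `g = f - T(f)·1`, so that `‖g‖ = VAR_D(f)`. The quadrature error is linear, and it vanishes
on constants almost surely (the weights sum to one) unless `T = 0`; either way the error of `f`
agrees almost surely with the error of `g`, whose root mean square is at most `DSC · ‖g‖` by the
definition of the discrepancy as a supremum. Dividing by `VAR · DSC` then gives both claims; when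
`VAR · DSC = 0` the mean square error of `f` vanishes, so the error is zero almost surely.
-/

open MeasureTheory

section SamplingError

variable {X F : Type*} [MeasurableSpace X] [AddCommGroup F] [Module ℝ F] {n : ℕ}

/-- The error `∫ g dν - ∫ g dν̂` of the sampling measure `ν̂ = ∑ i, w i • δ_{x i}`. -/
noncomputable def samplingError (ι : F →ₗ[ℝ] (X → ℝ)) (ν : Measure X) (w : Fin n → ℝ)
    (x : Fin n → X) (g : F) : ℝ :=
  ∫ t, ι g t ∂ν - ∑ i, w i * ι g (x i)

variable {ι : F →ₗ[ℝ] (X → ℝ)} {ν : Measure X} {w : Fin n → ℝ} {x : Fin n → X}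

@[simp]
theorem samplingError_zero : samplingError ι ν w x 0 = 0 := by
  simp [samplingError]

theorem samplingError_sub_smul (hint : ∀ g : F, Integrable (ι g) ν) (g h : F) (c : ℝ) :
    samplingError ι ν w x (g - c • h) = samplingError ι ν w x g - c * samplingError ι ν w x h := by
  have hintegral : ∫ t, ι (g - c • h) t ∂ν = ∫ t, ι g t ∂ν - c * ∫ t, ι h t ∂ν := by
    simp only [map_sub, map_smul, Pi.sub_apply, Pi.smul_apply, smul_eq_mul]
    rw [integral_sub (hint g) ((hint h).const_mul c), integral_const_mul]
  have hsum : ∑ i, w i * ι (g - c • h) (x i) =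
      ∑ i, w i * ι g (x i) - c * ∑ i, w i * ι h (x i) := by
    simp only [map_sub, map_smul, Pi.sub_apply, Pi.smul_apply, smul_eq_mul, Finset.mul_sum,
      ← Finset.sum_sub_distrib]
    exact Finset.sum_congr rfl fun i _ => by ring
  rw [samplingError, samplingError, samplingError, hintegral, hsum]
  ring

theorem samplingError_eq_zero_of_sum_eq_one [IsProbabilityMeasure ν] {one : F}
    (hone : ι one = fun _ => (1 : ℝ)) (hw : ∑ i, w i = 1) : samplingError ι ν w x one = 0 := by
  simp [samplingError, hone, hw]

end SamplingError

theorem le_sSup_div_norm_mul_norm {F : Type*} [NormedAddCommGroup F] (φ : F → ℝ)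
    (hbdd : BddAbove {r : ℝ | ∃ g : F, g ≠ 0 ∧ r = φ g / ‖g‖}) (h0 : φ 0 ≤ 0) (g : F) :
    φ g ≤ sSup {r : ℝ | ∃ g : F, g ≠ 0 ∧ r = φ g / ‖g‖} * ‖g‖ := by
  rcases eq_or_ne g 0 with rfl | hg
  · simpa using h0
  · rw [← div_le_iff₀ (norm_pos_iff.2 hg)]
    exact le_csSup hbdd ⟨g, hg, rfl⟩

section Confounding

variable {Ω : Type*} [MeasurableSpace Ω] {P : Measure Ω}

noncomputable def confounding (e : Ω → ℝ) (c : ℝ) (ω : Ω) : ℝ :=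
  if c ≠ 0 then e ω / c else 0

theorem ae_eq_confounding_mul {e : Ω → ℝ} {c : ℝ} (he : Integrable (fun ω => e ω ^ 2) P)
    (hle : ∫ ω, e ω ^ 2 ∂P ≤ c ^ 2) : ∀ᵐ ω ∂P, e ω = confounding e c ω * c := by
  by_cases hc : c = 0
  · subst hc
    have hzero : ∫ ω, e ω ^ 2 ∂P = 0 :=
      le_antisymm (by simpa using hle) (integral_nonneg fun ω => sq_nonneg (e ω))
    filter_upwards [(integral_eq_zero_iff_of_nonneg (fun ω => sq_nonneg (e ω)) he).1 hzero]
      with ω hω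
    simpa using hω
  · exact ae_of_all _ fun ω => by simp [confounding, hc]

theorem integral_sq_confounding_le_one {e : Ω → ℝ} {c : ℝ} (hle : ∫ ω, e ω ^ 2 ∂P ≤ c ^ 2) :
    ∫ ω, |confounding e c ω| ^ 2 ∂P ≤ 1 := by
  by_cases hc : c = 0
  · simp [confounding, hc]
  · simp only [confounding, if_pos hc, sq_abs, div_pow]
    rw [integral_div, div_le_one (by positivity)]
    exact hle

end Confounding

theorem randomized_trio_identity_general
    {X : Type*} [MeasurableSpace X] (ν : Measure X) [IsProbabilityMeasure ν]
    {Ω : Type*} [MeasurableSpace Ω] (P : Measure Ω) [IsProbabilityMeasure P]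
    {F : Type*} [NormedAddCommGroup F] [NormedSpace ℝ F]
    (ι : F →ₗ[ℝ] (X → ℝ))
    (hint : ∀ f : F, Integrable (ι f) ν)
    (one : F) (hone : ι one = fun _ => (1 : ℝ))
    (T : F →L[ℝ] ℝ)
    (n : ℕ) (w : Ω → Fin n → ℝ) (x : Ω → Fin n → X)
    (sample : F → Ω → ℝ)
    (hsample : ∀ g : F, ∀ ω : Ω, sample g ω = ∑ i, w ω i * ι g (x ω i))
    (hsmeas : ∀ g : F, Measurable (sample g))
    (hsint : ∀ g : F, Integrable (fun ω => (sample g ω) ^ 2) P)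
    (errFn : F → Ω → ℝ)
    (herr : ∀ g : F, ∀ ω : Ω, errFn g ω = (∫ t, ι g t ∂ν) - sample g ω)
    (hT : (∀ g : F, T g = 0) ∨ (∀ᵐ ω ∂P, (∑ i, w ω i) = 1))
    (hbdd : BddAbove
      {r : ℝ | ∃ g : F, g ≠ 0 ∧ r = Real.sqrt (∫ ω, (errFn g ω) ^ 2 ∂P) / ‖g‖})
    (DSC : ℝ)
    (hDSC : DSC = sSup
      {r : ℝ | ∃ g : F, g ≠ 0 ∧ r = Real.sqrt (∫ ω, (errFn g ω) ^ 2 ∂P) / ‖g‖})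
    (f : F)
    (VAR : ℝ) (hVAR : VAR = ‖f - T f • one‖)
    (CNF : Ω → ℝ)
    (hCNF : ∀ ω : Ω, CNF ω =
      if VAR * DSC ≠ 0 then errFn f ω / (VAR * DSC) else 0) :
    (∀ᵐ ω ∂P, errFn f ω = CNF ω * DSC * VAR) ∧ (∫ ω, |CNF ω| ^ 2 ∂P) ≤ 1 := by
  obtain rfl : CNF = confounding (errFn f) (VAR * DSC) := funext hCNF
  have herr_sampling : ∀ g ω, errFn g ω = samplingError ι ν (w ω) (x ω) g := fun g ω => by
    rw [herr, hsample, samplingError]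
  have hsq : Integrable (fun ω => errFn f ω ^ 2) P := by
    have hsample_L2 := (memLp_two_iff_integrable_sq (hsmeas f).aestronglyMeasurable).2 (hsint f)
    have herr_L2 := (memLp_const (∫ t, ι f t ∂ν)).sub hsample_L2
    simpa only [herr, Pi.sub_apply] using herr_L2.integrable_sq
  have hconst : ∀ᵐ ω ∂P, T f * samplingError ι ν (w ω) (x ω) one = 0 := by
    rcases hT with hT | hT
    · exact ae_of_all _ fun ω => by rw [hT f, zero_mul]
    · filter_upwards [hT] with ω hω
      rw [samplingError_eq_zero_of_sum_eq_one hone hω, mul_zero]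
  have hcentered : errFn (f - T f • one) =ᵐ[P] errFn f := by
    filter_upwards [hconst] with ω hω
    rw [herr_sampling, herr_sampling, samplingError_sub_smul hint, hω, sub_zero]
  have hbound : ∫ ω, errFn f ω ^ 2 ∂P ≤ (VAR * DSC) ^ 2 := by
    have hrms := le_sSup_div_norm_mul_norm (fun g => Real.sqrt (∫ ω, errFn g ω ^ 2 ∂P)) hbdd
      (by simp [herr_sampling]) (f - T f • one)
    rw [← hDSC, ← hVAR, Real.sqrt_le_iff, mul_comm DSC] at hrms
    calc ∫ ω, errFn f ω ^ 2 ∂P = ∫ ω, errFn (f - T f • one) ω ^ 2 ∂P :=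
          integral_congr_ae (hcentered.symm.fun_comp (· ^ 2))
      _ ≤ (VAR * DSC) ^ 2 := hrms.2
  refine ⟨?_, integral_sq_confounding_le_one hbound⟩
  filter_upwards [ae_eq_confounding_mul hsq hbound] with ω hω
  rw [hω, mul_assoc, mul_comm VAR]

/-- **Randomized trio error identity (Theorem 2).**
The sampling measure `ν̂_ω = ∑ i, w i ω • δ_{x i ω}` is random (drawn from a probability
space `(Ω, P)`); `sample g ω = ∫ g dν̂_ω`, `errFn g ω = μ(g) − sample g ω`.
The randomized discrepancy `DSC` is the supremum over nonzero `g ∈ F` of the root mean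
squared error divided by `‖g‖` (assumed finite, via `hbdd`), `VAR` is the deterministic
variation and `CNF ω` the randomized confounding.  Then almost surely
`errFn f ω = CNF ω * DSC * VAR`, and `E[|CNF|²] ≤ 1`. -/
theorem randomized_trio_identity
    {X : Type*} [MeasurableSpace X] (ν : Measure X) [IsProbabilityMeasure ν]
    {Ω : Type*} [MeasurableSpace Ω] (P : Measure Ω) [IsProbabilityMeasure P]
    {F : Type*} [NormedAddCommGroup F] [NormedSpace ℝ F]
    (ι : F →ₗ[ℝ] (X → ℝ))
    (hmeas : ∀ f : F, Measurable (ι f))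
    (hint : ∀ f : F, Integrable (ι f) ν)
    (one : F) (hone : ι one = fun _ => (1 : ℝ))
    (T : F →L[ℝ] ℝ)
    (n : ℕ) (w : Ω → Fin n → ℝ) (x : Ω → Fin n → X)
    (sample : F → Ω → ℝ)
    (hsample : ∀ g : F, ∀ ω : Ω, sample g ω = ∑ i, w ω i * ι g (x ω i))
    (hsmeas : ∀ g : F, Measurable (sample g))
    (hsint : ∀ g : F, Integrable (fun ω => (sample g ω) ^ 2) P)
    (errFn : F → Ω → ℝ)
    (herr : ∀ g : F, ∀ ω : Ω, errFn g ω = (∫ t, ι g t ∂ν) - sample g ω)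
    (hT : (∀ g : F, T g = 0) ∨ (∀ᵐ ω ∂P, (∑ i, w ω i) = 1))
    (hbdd : BddAbove
      {r : ℝ | ∃ g : F, g ≠ 0 ∧ r = Real.sqrt (∫ ω, (errFn g ω) ^ 2 ∂P) / ‖g‖})
    (DSC : ℝ)
    (hDSC : DSC = sSup
      {r : ℝ | ∃ g : F, g ≠ 0 ∧ r = Real.sqrt (∫ ω, (errFn g ω) ^ 2 ∂P) / ‖g‖})
    (f : F)
    (VAR : ℝ) (hVAR : VAR = ‖f - T f • one‖)
    (CNF : Ω → ℝ)
    (hCNF : ∀ ω : Ω, CNF ω =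
      if VAR * DSC ≠ 0 then errFn f ω / (VAR * DSC) else 0) :
    (∀ᵐ ω ∂P, errFn f ω = CNF ω * DSC * VAR) ∧ (∫ ω, |CNF ω| ^ 2 ∂P) ≤ 1 :=
  randomized_trio_identity_general ν P ι hint one hone T n w x sample hsample hsmeas hsint errFn
    herr hT hbdd DSC hDSC f VAR hVAR CNF hCNF
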